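/- arXiv:0810.2856 — 2 statements merged into one kernel-verified Lean document; each statement's English description precedes it below -/
import Mathlib

section
/- Let 𝒜 be a nonempty bounded set of complex d×d matrices. Then ρ(𝒜) = 0 if and only if 𝒜^d = {0}, i.e. if and only if every product of d matrices from 𝒜 is the zero matrix (the matrix set 𝒜 is nilpotent). -/
/-!
If `ρ(𝒜) = 0`, look at the common kernels `Kₙ` of all products of length `n`. They increase, and
`Kₙ₊₁ = {v | ∀ A ∈ 𝒜, A v ∈ Kₙ}`, so the chain is stationary from step `d` on. If `N = K_d` were
a proper subspace, every `A ∈ 𝒜` would act on `ℂ^d ⧸ N` and no nonzero vector of the quotient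
would be killed by all of them. Compactness of the unit sphere of the quotient then yields a
uniform `c > 0` such that every vector is expanded by a factor `c` by some `A ∈ 𝒜`, so
`‖𝒜ⁿ‖ ≥ r cⁿ` for some `r > 0`, and `ρ(𝒜) ≥ c min(r, 1) > 0`. Conversely `𝒜^d = {0}` gives
`𝒜^(d+1) = {0}`, hence `ρ(𝒜) = 0`.
-/

open scoped Pointwise

/-- `ν` is a norm on `ℂ^d`. -/
structure IsNorm (d : ℕ) (ν : (Fin d → ℂ) → ℝ) : Prop where
  nonneg : ∀ v, 0 ≤ ν v
  eq_zero_iff : ∀ v, ν v = 0 ↔ v = 0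
  homog : ∀ (c : ℂ) (v), ν (c • v) = ‖c‖ * ν v
  triangle : ∀ v w, ν (v + w) ≤ ν v + ν w

/-- Operator norm on `d × d` complex matrices induced by the norm `ν` on `ℂ^d`. -/
noncomputable def opNorm {d : ℕ} (ν : (Fin d → ℂ) → ℝ)
    (A : Matrix (Fin d) (Fin d) ℂ) : ℝ :=
  sInf {c : ℝ | 0 ≤ c ∧ ∀ v, ν (A.mulVec v) ≤ c * ν v}

/-- Norm of a set of matrices: the supremum of the norms of its elements. -/
noncomputable def setNorm {d : ℕ} (ν : (Fin d → ℂ) → ℝ)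
    (𝒜 : Set (Matrix (Fin d) (Fin d) ℂ)) : ℝ :=
  sSup (opNorm ν '' 𝒜)

/-- Joint spectral radius of a set of matrices: `ρ(𝒜) = inf_{n ≥ 1} ‖𝒜^n‖^{1/n}`. -/
noncomputable def jsr {d : ℕ} (ν : (Fin d → ℂ) → ℝ)
    (𝒜 : Set (Matrix (Fin d) (Fin d) ℂ)) : ℝ :=
  ⨅ n : {n : ℕ // 1 ≤ n}, setNorm ν (𝒜 ^ (n : ℕ)) ^ (((n : ℕ) : ℝ)⁻¹)

open Metric
open scoped Matrix

section UniformLowerBound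

variable {𝕜 E ι : Type*} [RCLike 𝕜] [NormedAddCommGroup E] [NormedSpace 𝕜 E] [ProperSpace E]

/-- The sets `{x | ∃ i, 1/(n+1) < f i x}` form an increasing open cover of the unit sphere, so by
compactness one of them already covers it. -/
theorem exists_pos_forall_exists_mul_norm_lt (f : ι → E → ℝ) (hf : ∀ i, Continuous (f i))
    (hf_smul : ∀ i (c : 𝕜) x, f i (c • x) = ‖c‖ * f i x) (hf_pos : ∀ x ≠ 0, ∃ i, 0 < f i x) :
    ∃ c > 0, ∀ x ≠ 0, ∃ i, c * ‖x‖ < f i x := by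
  let U : ℕ → Set E := fun n => ⋃ i, {x | ((n : ℝ) + 1)⁻¹ < f i x}
  have hU_open (n : ℕ) : IsOpen (U n) :=
    isOpen_iUnion fun i => isOpen_lt continuous_const (hf i)
  have hU_mono : Monotone U := fun m n hmn =>
    Set.iUnion_mono fun i x (hx : ((m : ℝ) + 1)⁻¹ < f i x) =>
      (lt_of_le_of_lt (by gcongr) hx : ((n : ℝ) + 1)⁻¹ < f i x)
  have hU_cover : sphere (0 : E) 1 ⊆ ⋃ n, U n := by
    intro x hx
    obtain ⟨i, hi⟩ := hf_pos x (ne_of_mem_sphere hx one_ne_zero)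
    obtain ⟨n, hn⟩ := exists_nat_one_div_lt hi
    exact Set.mem_iUnion.2 ⟨n, Set.mem_iUnion.2 ⟨i, (by simpa only [one_div] using hn : _ < f i x)⟩⟩
  obtain ⟨n, hn⟩ :=
    (isCompact_sphere 0 1).elim_directed_cover U hU_open hU_cover hU_mono.directed_le
  refine ⟨((n : ℝ) + 1)⁻¹, by positivity, fun x hx => ?_⟩
  have hx_pos : 0 < ‖x‖ := norm_pos_iff.2 hx
  have hx_unit : ((‖x‖⁻¹ : ℝ) : 𝕜) • x ∈ sphere (0 : E) 1 := by
    simp [norm_smul, hx_pos.ne']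
  obtain ⟨i, hi⟩ := Set.mem_iUnion.1 (hn hx_unit)
  refine ⟨i, ?_⟩
  have hi : ((n : ℝ) + 1)⁻¹ < ‖x‖⁻¹ * f i x := by
    simpa [hf_smul, hx_pos.le] using hi
  rwa [lt_inv_mul_iff₀ hx_pos, mul_comm] at hi

end UniformLowerBound

namespace IsNorm

variable {d : ℕ} {ν : (Fin d → ℂ) → ℝ}

theorem map_zero (hν : IsNorm d ν) : ν 0 = 0 := (hν.eq_zero_iff 0).2 rfl

theorem pos (hν : IsNorm d ν) {v : Fin d → ℂ} (hv : v ≠ 0) : 0 < ν v :=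
  (hν.nonneg v).lt_of_ne' fun h => hv ((hν.eq_zero_iff v).1 h)

theorem exists_le_mul_norm (hν : IsNorm d ν) : ∃ b ≥ 0, ∀ v, ν v ≤ b * ‖v‖ := by
  classical
  refine ⟨∑ i, ν (Pi.single i 1), Finset.sum_nonneg fun i _ => hν.nonneg _, fun v => ?_⟩
  calc ν v = ν (∑ i, v i • Pi.single i 1) := by
        congr 1; ext j; simp [Pi.single_apply]
    _ ≤ ∑ i, ν (v i • Pi.single i 1) :=
        Finset.le_sum_of_subadditive ν hν.map_zero.le hν.triangle _ _
    _ = ∑ i, ‖v i‖ * ν (Pi.single i 1) := by simp only [hν.homog]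
    _ ≤ ∑ i, ‖v‖ * ν (Pi.single i 1) := by
        gcongr with i
        · exact hν.nonneg _
        · exact norm_le_pi_norm v i
    _ = (∑ i, ν (Pi.single i 1)) * ‖v‖ := by rw [← Finset.mul_sum, mul_comm]

theorem continuous (hν : IsNorm d ν) : Continuous ν := by
  obtain ⟨b, -, hb⟩ := hν.exists_le_mul_norm
  refine (LipschitzWith.of_le_add_mul' b fun v w => ?_).continuous
  calc ν v = ν (w + (v - w)) := by rw [add_sub_cancel]
    _ ≤ ν w + ν (v - w) := hν.triangle _ _
    _ ≤ ν w + b * dist v w := by rw [dist_eq_norm]; gcongr; exact hb _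

theorem exists_pos_mul_norm_le (hν : IsNorm d ν) : ∃ a > 0, ∀ v, a * ‖v‖ ≤ ν v := by
  obtain ⟨a, ha, h⟩ := exists_pos_forall_exists_mul_norm_lt (𝕜 := ℂ) (fun _ : Unit => ν)
    (fun _ => hν.continuous) (fun _ => hν.homog) fun v hv => ⟨(), hν.pos hv⟩
  refine ⟨a, ha, fun v => ?_⟩
  rcases eq_or_ne v 0 with rfl | hv
  · simp [hν.map_zero]
  · obtain ⟨-, hlt⟩ := h v hv
    exact hlt.le

end IsNorm

section OpNorm

variable {d : ℕ} {ν : (Fin d → ℂ) → ℝ}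

theorem opNorm_nonneg (A : Matrix (Fin d) (Fin d) ℂ) : 0 ≤ opNorm ν A :=
  Real.sInf_nonneg fun _ hc => hc.1

theorem opNorm_le_bound (A : Matrix (Fin d) (Fin d) ℂ) {c : ℝ} (hc : 0 ≤ c)
    (h : ∀ v, ν (A *ᵥ v) ≤ c * ν v) : opNorm ν A ≤ c :=
  csInf_le ⟨0, fun _ hc => hc.1⟩ ⟨hc, h⟩

theorem IsNorm.exists_bound (hν : IsNorm d ν) (A : Matrix (Fin d) (Fin d) ℂ) :
    ∃ c ≥ 0, ∀ v, ν (A *ᵥ v) ≤ c * ν v := by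
  obtain ⟨a, ha, hνa⟩ := hν.exists_pos_mul_norm_le
  obtain ⟨b, hb, hνb⟩ := hν.exists_le_mul_norm
  let T := LinearMap.toContinuousLinearMap A.mulVecLin
  refine ⟨b * ‖T‖ / a, by positivity, fun v => ?_⟩
  calc ν (A *ᵥ v) ≤ b * ‖T v‖ := hνb _
    _ ≤ b * (‖T‖ * ‖v‖) := by gcongr; exact T.le_opNorm v
    _ ≤ b * (‖T‖ * (ν v / a)) := by gcongr; rw [le_div_iff₀' ha]; exact hνa v
    _ = b * ‖T‖ / a * ν v := by ring

theorem IsNorm.le_opNorm (hν : IsNorm d ν) (A : Matrix (Fin d) (Fin d) ℂ) (v : Fin d → ℂ) :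
    ν (A *ᵥ v) ≤ opNorm ν A * ν v := by
  rcases eq_or_ne v 0 with rfl | hv
  · simp [hν.map_zero]
  have hv_pos := hν.pos hv
  rw [← div_le_iff₀ hv_pos]
  obtain ⟨c, hc, hAc⟩ := hν.exists_bound A
  exact le_csInf ⟨c, hc, hAc⟩ fun c' hc' => (div_le_iff₀ hv_pos).2 (hc'.2 v)

theorem IsNorm.opNorm_mul_le (hν : IsNorm d ν) (A B : Matrix (Fin d) (Fin d) ℂ) :
    opNorm ν (A * B) ≤ opNorm ν A * opNorm ν B := by
  refine opNorm_le_bound _ (mul_nonneg (opNorm_nonneg A) (opNorm_nonneg B)) fun v => ?_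
  calc ν ((A * B) *ᵥ v) = ν (A *ᵥ B *ᵥ v) := by rw [Matrix.mulVec_mulVec]
    _ ≤ opNorm ν A * ν (B *ᵥ v) := hν.le_opNorm A _
    _ ≤ opNorm ν A * (opNorm ν B * ν v) := by gcongr; exacts [opNorm_nonneg A, hν.le_opNorm B v]
    _ = opNorm ν A * opNorm ν B * ν v := by ring

theorem opNorm_one_le : opNorm ν (1 : Matrix (Fin d) (Fin d) ℂ) ≤ 1 :=
  opNorm_le_bound _ zero_le_one fun v => by rw [Matrix.one_mulVec, one_mul]

end OpNorm

section JointSpectralRadius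

variable {d : ℕ} {ν : (Fin d → ℂ) → ℝ} {𝒜 : Set (Matrix (Fin d) (Fin d) ℂ)}

theorem IsNorm.opNorm_le_pow_of_mem_pow (hν : IsNorm d ν) {M : ℝ} (hM₀ : 0 ≤ M)
    (hM : ∀ A ∈ 𝒜, opNorm ν A ≤ M) {n : ℕ} {P : Matrix (Fin d) (Fin d) ℂ} (hP : P ∈ 𝒜 ^ n) :
    opNorm ν P ≤ M ^ n := by
  induction n generalizing P with
  | zero =>
    rw [pow_zero, Set.mem_one] at hP
    rw [hP, pow_zero]
    exact opNorm_one_le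
  | succ n ih =>
    rw [pow_succ] at hP
    obtain ⟨Q, hQ, A, hA, rfl⟩ := hP
    calc opNorm ν (Q * A) ≤ opNorm ν Q * opNorm ν A := hν.opNorm_mul_le Q A
      _ ≤ M ^ n * M := mul_le_mul (ih hQ) (hM A hA) (opNorm_nonneg A) (pow_nonneg hM₀ n)
      _ = M ^ (n + 1) := (pow_succ M n).symm

theorem IsNorm.bddAbove_opNorm_pow (hν : IsNorm d ν) {M : ℝ} (hM : ∀ A ∈ 𝒜, opNorm ν A ≤ M)
    (n : ℕ) : BddAbove (opNorm ν '' (𝒜 ^ n)) :=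
  ⟨max M 0 ^ n, Set.forall_mem_image.2 fun _ hP => hν.opNorm_le_pow_of_mem_pow
    (le_max_right M 0) (fun A hA => (hM A hA).trans (le_max_left M 0)) hP⟩

theorem setNorm_nonneg (S : Set (Matrix (Fin d) (Fin d) ℂ)) : 0 ≤ setNorm ν S :=
  Real.sSup_nonneg (Set.forall_mem_image.2 fun P _ => opNorm_nonneg P)

theorem jsr_nonneg : 0 ≤ jsr ν 𝒜 :=
  Real.iInf_nonneg fun _ => Real.rpow_nonneg (setNorm_nonneg _) _

theorem jsr_le_setNorm_pow_rpow {n : ℕ} (hn : 1 ≤ n) :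
    jsr ν 𝒜 ≤ setNorm ν (𝒜 ^ n) ^ (n : ℝ)⁻¹ :=
  ciInf_le ⟨0, Set.forall_mem_range.2 fun _ => Real.rpow_nonneg (setNorm_nonneg _) _⟩
    (⟨n, hn⟩ : {n : ℕ // 1 ≤ n})

theorem IsNorm.jsr_eq_zero_of_pow_subset_zero (hν : IsNorm d ν) {n : ℕ} (hn : n ≠ 0)
    (h : 𝒜 ^ n ⊆ {0}) : jsr ν 𝒜 = 0 := by
  have hS : setNorm ν (𝒜 ^ n) = 0 := by
    refine le_antisymm (Real.sSup_nonpos (Set.forall_mem_image.2 fun P hP => ?_))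
      (setNorm_nonneg _)
    rw [h hP]
    exact opNorm_le_bound 0 le_rfl fun v => by simp [hν.map_zero]
  refine le_antisymm ?_ jsr_nonneg
  simpa [hS, hn] using jsr_le_setNorm_pow_rpow (ν := ν) (𝒜 := 𝒜) (Nat.one_le_iff_ne_zero.2 hn)

theorem jsr_pos_of_mul_pow_le {r c : ℝ} (hr : 0 < r) (hc : 0 < c)
    (h : ∀ n ≥ 1, r * c ^ n ≤ setNorm ν (𝒜 ^ n)) : 0 < jsr ν 𝒜 := by
  set ε := min r 1 * c
  have hε : 0 < ε := by positivity
  refine hε.trans_le (le_ciInf fun ⟨n, hn⟩ => ?_)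
  have hn₀ : n ≠ 0 := Nat.one_le_iff_ne_zero.1 hn
  calc ε = (ε ^ n) ^ (n : ℝ)⁻¹ := (Real.pow_rpow_inv_natCast hε.le hn₀).symm
    _ ≤ setNorm ν (𝒜 ^ n) ^ (n : ℝ)⁻¹ := by
      gcongr
      calc ε ^ n = min r 1 ^ n * c ^ n := mul_pow _ _ _
        _ ≤ min r 1 * c ^ n := by
          gcongr; exact pow_le_of_le_one (by positivity) (min_le_right _ _) hn₀
        _ ≤ r * c ^ n := by gcongr; exact min_le_left _ _
        _ ≤ setNorm ν (𝒜 ^ n) := h n hn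

end JointSpectralRadius

section CommonKernel

variable {ι K : Type*} [Fintype ι] [DecidableEq ι] [Field K]

def commonKer (𝒜 : Set (Matrix ι ι K)) (n : ℕ) : Submodule K (ι → K) :=
  ⨅ P ∈ 𝒜 ^ n, LinearMap.ker P.mulVecLin

variable {𝒜 : Set (Matrix ι ι K)}

theorem mem_commonKer {n : ℕ} {v : ι → K} : v ∈ commonKer 𝒜 n ↔ ∀ P ∈ 𝒜 ^ n, P *ᵥ v = 0 := by
  simp [commonKer, Submodule.mem_iInf]

theorem mem_commonKer_succ {n : ℕ} {v : ι → K} :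
    v ∈ commonKer 𝒜 (n + 1) ↔ ∀ A ∈ 𝒜, A *ᵥ v ∈ commonKer 𝒜 n := by
  simp only [mem_commonKer, Matrix.mulVec_mulVec]
  constructor
  · exact fun h A hA P hP => h _ (pow_succ 𝒜 n ▸ Set.mul_mem_mul hP hA)
  · rintro h _ hPA
    rw [pow_succ] at hPA
    obtain ⟨P, hP, A, hA, rfl⟩ := hPA
    exact h A hA P hP

theorem commonKer_zero : commonKer 𝒜 0 = ⊥ :=
  eq_bot_iff.2 fun v hv => by simpa using mem_commonKer.1 hv 1 (by simp)

theorem commonKer_mono : Monotone (commonKer 𝒜) := by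
  refine monotone_nat_of_le_succ fun n => ?_
  induction n with
  | zero => exact commonKer_zero (𝒜 := 𝒜) ▸ bot_le
  | succ n ih =>
    exact fun v hv => mem_commonKer_succ.2 fun A hA => ih (mem_commonKer_succ.1 hv A hA)

theorem commonKer_succ_congr {m n : ℕ} (h : commonKer 𝒜 m = commonKer 𝒜 n) :
    commonKer 𝒜 (m + 1) = commonKer 𝒜 (n + 1) := by
  ext v
  rw [mem_commonKer_succ, mem_commonKer_succ, h]

/-- Since `commonKer 𝒜 (n + 1)` is determined by `commonKer 𝒜 n`, the increasing chain is
constant as soon as it stops growing, and it can grow at most `card ι` times. -/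
theorem commonKer_card_succ :
    commonKer 𝒜 (Fintype.card ι + 1) = commonKer 𝒜 (Fintype.card ι) := by
  have h_eq {m n : ℕ} (hmn : m ≤ n)
      (h : Module.finrank K (commonKer 𝒜 m) = Module.finrank K (commonKer 𝒜 n)) :
      commonKer 𝒜 m = commonKer 𝒜 n :=
    Submodule.eq_of_le_of_finrank_eq (commonKer_mono hmn) h
  have h_bound (n : ℕ) : Module.finrank K (commonKer 𝒜 n) ≤ Fintype.card ι :=
    (Submodule.finrank_le _).trans_eq (Module.finrank_fintype_fun_eq_card K)
  have h_stab (m : ℕ)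
      (h : Module.finrank K (commonKer 𝒜 m) = Module.finrank K (commonKer 𝒜 (m + 1))) :
      Module.finrank K (commonKer 𝒜 (m + 1)) = Module.finrank K (commonKer 𝒜 (m + 2)) := by
    rw [commonKer_succ_congr (h_eq (Nat.le_succ m) h)]
  have h_finrank := Nat.stabilises_of_monotone (f := fun n => Module.finrank K (commonKer 𝒜 n))
    (fun m n hmn => Submodule.finrank_mono (commonKer_mono hmn)) h_bound h_stab (Nat.le_succ _)
  exact (h_eq (Nat.le_succ _) h_finrank.symm).symm

theorem commonKer_eq_top_iff {n : ℕ} : commonKer 𝒜 n = ⊤ ↔ 𝒜 ^ n ⊆ {0} := by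
  simp only [Submodule.eq_top_iff', mem_commonKer]
  constructor
  · exact fun h P hP => Matrix.ext_of_mulVec_single fun i => by
      rw [h _ P hP, Matrix.zero_mulVec]
  · rintro h v P hP
    rw [h hP, Matrix.zero_mulVec]

end CommonKernel

theorem exists_mem_pow_pow_mul_le {R ι : Type*} [Semiring R] [Fintype ι] [DecidableEq ι]
    {𝒜 : Set (Matrix ι ι R)} (g : (ι → R) → ℝ) {c : ℝ} (hc : 0 < c)
    (h : ∀ v, 0 < g v → ∃ A ∈ 𝒜, c * g v ≤ g (A *ᵥ v)) {v : ι → R} (hv : 0 < g v) (n : ℕ) :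
    ∃ P ∈ 𝒜 ^ n, c ^ n * g v ≤ g (P *ᵥ v) := by
  induction n with
  | zero => exact ⟨1, by simp, by simp⟩
  | succ n ih =>
    obtain ⟨P, hP, hPv⟩ := ih
    obtain ⟨A, hA, hAPv⟩ := h (P *ᵥ v) ((by positivity : 0 < c ^ n * g v).trans_le hPv)
    refine ⟨A * P, pow_succ' 𝒜 n ▸ Set.mul_mem_mul hA hP, ?_⟩
    calc c ^ (n + 1) * g v = c * (c ^ n * g v) := by ring
      _ ≤ c * g (P *ᵥ v) := by gcongr
      _ ≤ g (A *ᵥ P *ᵥ v) := hAPv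
      _ = g ((A * P) *ᵥ v) := by rw [Matrix.mulVec_mulVec]

theorem exists_pos_forall_exists_mul_norm_mkQ_lt {𝕜 ι : Type*} [RCLike 𝕜] [Fintype ι]
    {𝒜 : Set (Matrix ι ι 𝕜)} {N : Submodule 𝕜 (ι → 𝕜)}
    (hN : ∀ v, v ∈ N ↔ ∀ A ∈ 𝒜, A *ᵥ v ∈ N) :
    ∃ c > 0, ∀ v ∉ N, ∃ A ∈ 𝒜, c * ‖N.mkQ v‖ < ‖N.mkQ (A *ᵥ v)‖ := by
  have : IsClosed (N : Set (ι → 𝕜)) := N.closed_of_finiteDimensional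
  have := FiniteDimensional.proper_rclike 𝕜 ((ι → 𝕜) ⧸ N)
  let L (A : 𝒜) : ((ι → 𝕜) ⧸ N) →ₗ[𝕜] ((ι → 𝕜) ⧸ N) :=
    N.mapQ N A.1.mulVecLin fun v hv => (hN v).1 hv A A.2
  have hL_pos (x : (ι → 𝕜) ⧸ N) (hx : x ≠ 0) : ∃ A, 0 < ‖L A x‖ := by
    obtain ⟨v, rfl⟩ := N.mkQ_surjective x
    obtain ⟨A, hA, hAv⟩ : ∃ A ∈ 𝒜, A *ᵥ v ∉ N := by simpa [hN v] using hx
    exact ⟨⟨A, hA⟩, norm_pos_iff.2 (by simpa using hAv : N.mkQ (A *ᵥ v) ≠ 0)⟩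
  obtain ⟨c, hc, h⟩ := exists_pos_forall_exists_mul_norm_lt (𝕜 := 𝕜) (fun A x => ‖L A x‖)
    (fun A => (L A).continuous_of_finiteDimensional.norm)
    (fun A c x => by rw [map_smul, norm_smul]) hL_pos
  refine ⟨c, hc, fun v hv => ?_⟩
  obtain ⟨A, hA⟩ := h (N.mkQ v) (by simpa using hv)
  exact ⟨A, A.2, hA⟩

theorem IsNorm.jsr_pos_of_forall_mem_iff {d : ℕ} {ν : (Fin d → ℂ) → ℝ} (hν : IsNorm d ν)
    {𝒜 : Set (Matrix (Fin d) (Fin d) ℂ)} {M : ℝ} (hM : ∀ A ∈ 𝒜, opNorm ν A ≤ M)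
    {N : Submodule ℂ (Fin d → ℂ)} (hN_top : N ≠ ⊤) (hN : ∀ v, v ∈ N ↔ ∀ A ∈ 𝒜, A *ᵥ v ∈ N) :
    0 < jsr ν 𝒜 := by
  have : IsClosed (N : Set (Fin d → ℂ)) := N.closed_of_finiteDimensional
  obtain ⟨c, hc, h_expand⟩ := exists_pos_forall_exists_mul_norm_mkQ_lt hN
  obtain ⟨a, ha, hνa⟩ := hν.exists_pos_mul_norm_le
  obtain ⟨v₀, hv₀⟩ := SetLike.exists_not_mem_of_ne_top N hN_top
  have hv₀_pos : 0 < ‖N.mkQ v₀‖ := norm_pos_iff.2 (by simpa using hv₀)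
  have h_expand' (v : Fin d → ℂ) (hv : 0 < ‖N.mkQ v‖) :
      ∃ A ∈ 𝒜, c * ‖N.mkQ v‖ ≤ ‖N.mkQ (A *ᵥ v)‖ := by
    obtain ⟨A, hA, hlt⟩ := h_expand v fun hvN => by simp [hvN] at hv
    exact ⟨A, hA, hlt.le⟩
  have hν₀ := hν.pos (show v₀ ≠ 0 by rintro rfl; exact hv₀ N.zero_mem)
  refine jsr_pos_of_mul_pow_le (r := a * ‖N.mkQ v₀‖ / ν v₀) (by positivity) hc fun n _ => ?_
  obtain ⟨P, hP, hPv₀⟩ := exists_mem_pow_pow_mul_le _ hc h_expand' hv₀_pos n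
  calc a * ‖N.mkQ v₀‖ / ν v₀ * c ^ n = a * (c ^ n * ‖N.mkQ v₀‖) / ν v₀ := by ring
    _ ≤ a * ‖N.mkQ (P *ᵥ v₀)‖ / ν v₀ := by gcongr
    _ ≤ a * ‖P *ᵥ v₀‖ / ν v₀ := by gcongr; exact Submodule.Quotient.norm_mk_le N _
    _ ≤ ν (P *ᵥ v₀) / ν v₀ := by gcongr; exact hνa _
    _ ≤ opNorm ν P := by rw [div_le_iff₀ hν₀]; exact hν.le_opNorm P v₀
    _ ≤ setNorm ν (𝒜 ^ n) := le_csSup (hν.bddAbove_opNorm_pow hM n) ⟨P, hP, rfl⟩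

/-- `ρ(𝒜) = 0` if and only if `𝒜^d = {0}`, i.e. the matrix set `𝒜` is nilpotent. -/
theorem jsr_eq_zero_iff_nilpotent
    (d : ℕ)
    (𝒜 : Set (Matrix (Fin d) (Fin d) ℂ)) (h_ne : 𝒜.Nonempty)
    (ν : (Fin d → ℂ) → ℝ) (hν : IsNorm d ν)
    (h_bdd : ∃ M : ℝ, ∀ A ∈ 𝒜, opNorm ν A ≤ M) :
    jsr ν 𝒜 = 0 ↔ 𝒜 ^ d = ({0} : Set (Matrix (Fin d) (Fin d) ℂ)) := by
  have h_stab : commonKer 𝒜 (d + 1) = commonKer 𝒜 d := by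
    simpa using commonKer_card_succ (𝒜 := 𝒜)
  constructor
  · intro h_jsr
    obtain ⟨M, hM⟩ := h_bdd
    have h_top : commonKer 𝒜 d = ⊤ := by
      by_contra h_top
      refine (hν.jsr_pos_of_forall_mem_iff hM h_top fun v => ?_).ne' h_jsr
      rw [← mem_commonKer_succ, h_stab]
    exact h_ne.pow.subset_singleton_iff.1 (commonKer_eq_top_iff.1 h_top)
  · intro h_nil
    refine hν.jsr_eq_zero_of_pow_subset_zero d.succ_ne_zero ?_
    rw [pow_succ, h_nil]
    rintro _ ⟨_, rfl, A, -, rfl⟩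
    exact zero_mul A
end

section
/- For every norm ‖·‖₁ on ℂ^d there exists an invertible complex d×d matrix S such that d^{-1/2} ‖v‖₁ ≤ ‖Sv‖_e ≤ ‖v‖₁ for all v ∈ ℂ^d, where ‖·‖_e is the Euclidean norm on ℂ^d. -/
/-- The Euclidean norm on `ℂ^d`. -/
noncomputable def euclNorm (d : ℕ) (v : Fin d → ℂ) : ℝ :=
  Real.sqrt (∑ i, ‖v i‖ ^ 2)

/-! Among the matrices `S` with `‖S v‖_e ≤ ν v` for all `v` (the ellipsoids `{‖S v‖_e ≤ 1}`
containing the unit ball of `ν`) pick one of maximal `|det S|`; they form a compact set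
containing a multiple of the identity. If `‖S x‖_e < d^{-1/2} ν x` for some `x`, a supporting
functional of `ν` at `x` yields a unit vector `u` and `l` with `d l² < 1` such that the unit ball of
`ν` lies in the slab `|⟪u, S v⟫| ≤ l`. Contracting the ellipsoid along `u` while slightly inflating
it orthogonally keeps it around the unit ball of `ν` and increases `|det|`, a contradiction. -/

open Matrix WithLp
open scoped InnerProductSpace

section Euclidean

variable {d : ℕ}

theorem euclNorm_eq_norm_toLp (w : Fin d → ℂ) :
    euclNorm d w = ‖(toLp 2 w : EuclideanSpace ℂ (Fin d))‖ := by
  rw [EuclideanSpace.norm_eq]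
  rfl

theorem euclNorm_nonneg (w : Fin d → ℂ) : 0 ≤ euclNorm d w := Real.sqrt_nonneg _

theorem euclNorm_smul (c : ℂ) (w : Fin d → ℂ) : euclNorm d (c • w) = ‖c‖ * euclNorm d w := by
  simp only [euclNorm_eq_norm_toLp, WithLp.toLp_smul, norm_smul]

theorem norm_apply_le_euclNorm (w : Fin d → ℂ) (i : Fin d) : ‖w i‖ ≤ euclNorm d w := by
  rw [euclNorm_eq_norm_toLp]
  exact PiLp.norm_apply_le (toLp 2 w : EuclideanSpace ℂ (Fin d)) i

theorem continuous_euclNorm : Continuous (euclNorm d) := by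
  simp only [funext euclNorm_eq_norm_toLp]
  exact continuous_norm.comp (PiLp.continuous_toLp 2 _)

end Euclidean

theorem norm_sq_smul_add_inner_smul {𝕜 E : Type*} [RCLike 𝕜] [NormedAddCommGroup E]
    [InnerProductSpace 𝕜 E] {u : E} (hu : ‖u‖ = 1) (p q : ℝ) (w : E) :
    ‖(p : 𝕜) • w + (((q - p : ℝ) : 𝕜) * ⟪u, w⟫_𝕜) • u‖ ^ 2 =
      p ^ 2 * ‖w‖ ^ 2 + (q ^ 2 - p ^ 2) * ‖⟪u, w⟫_𝕜‖ ^ 2 := by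
  rw [@norm_add_sq 𝕜, norm_smul, norm_smul, hu, inner_smul_left, inner_smul_right,
    ← inner_conj_symm u w, norm_mul]
  simp only [RCLike.conj_ofReal, RCLike.norm_ofReal, RCLike.norm_conj, mul_assoc, RCLike.conj_mul]
  norm_cast
  rw [mul_one, mul_pow, mul_pow, sq_abs, sq_abs]
  ring

theorem one_add_pow_mul_one_sub_lt_one {ε : ℝ} (hε : 0 < ε) {k : ℕ} (hk : k ≠ 0) :
    (1 + ε) ^ k * (1 - k * ε) < 1 := by
  rcases le_or_gt 1 (k * ε) with hkε | hkε
  · nlinarith [pow_pos (by linarith : 0 < 1 + ε) k]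
  have hε1 : ε < 1 := by
    have : (1 : ℝ) ≤ k := Nat.one_le_cast.2 (Nat.one_le_iff_ne_zero.2 hk)
    nlinarith
  calc (1 + ε) ^ k * (1 - k * ε) ≤ (1 + ε) ^ k * (1 - ε) ^ k := by
        gcongr
        simpa [sub_eq_add_neg] using one_add_mul_le_pow (by linarith : -2 ≤ -ε) k
    _ = (1 - ε ^ 2) ^ k := by rw [← mul_pow]; ring
    _ < 1 := pow_lt_one₀ (by nlinarith) (by nlinarith) hk

theorem exists_stretch_params {n : ℕ} {l : ℝ} (hl : 0 < l) (hnl : (n + 1) * l ^ 2 < 1) :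
    ∃ p q : ℝ, 0 < p ∧ p ≤ q ∧ p ^ 2 * (1 - l ^ 2) + q ^ 2 * l ^ 2 ≤ 1 ∧ 1 < p ^ n * q := by
  -- `p² = 1 / (1 + ε)`, `q² = p² / ((n + 1) l²)`; then `1 < p^(2n) q²` is Bernoulli's inequality.
  set ε := 1 / (n + 1) - l ^ 2 with hε_def
  have hn : (0 : ℝ) < n + 1 := by positivity
  have hε : 0 < ε := by rw [hε_def, lt_sub_iff_add_lt, zero_add, lt_div_iff₀ hn]; linarith
  have hnε : (n + 1) * l ^ 2 = 1 - (n + 1) * ε := by rw [hε_def]; field_simp; ring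
  set a := 1 / (1 + ε) with ha_def
  set b := 1 / ((n + 1) * l ^ 2 * (1 + ε)) with hb_def
  have ha : 0 < a := by positivity
  have hb : 0 < b := by positivity
  refine ⟨√a, √b, Real.sqrt_pos.2 ha, Real.sqrt_le_sqrt ?_, ?_, ?_⟩
  · exact one_div_le_one_div_of_le (by positivity) (by nlinarith)
  · rw [Real.sq_sqrt ha.le, Real.sq_sqrt hb.le, ha_def, hb_def]
    field_simp
    linarith
  · have key : (1 + ε) ^ (n + 1) * ((n + 1) * l ^ 2) < 1 := by
      rw [hnε]
      exact_mod_cast one_add_pow_mul_one_sub_lt_one hε (Nat.succ_ne_zero n)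
    refine (one_lt_sq_iff₀ (by positivity)).1 ?_
    rw [mul_pow, ← pow_mul, mul_comm n 2, pow_mul, Real.sq_sqrt ha.le, Real.sq_sqrt hb.le, ha_def,
      hb_def, div_pow, one_pow, div_mul_div_comm, one_mul, one_lt_div (by positivity)]
    exact lt_of_eq_of_lt (by ring) key

section Stretch

variable {d : ℕ}

def stretch (u : EuclideanSpace ℂ (Fin d)) (p q : ℝ) : Matrix (Fin d) (Fin d) ℂ :=
  (p : ℂ) • 1 + ((q - p : ℝ) : ℂ) • vecMulVec (ofLp u) (star (ofLp u))

theorem toLp_stretch_mulVec (u : EuclideanSpace ℂ (Fin d)) (p q : ℝ) (w : Fin d → ℂ) :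
    toLp 2 (stretch u p q *ᵥ w) =
      (p : ℂ) • toLp 2 w + (((q - p : ℝ) : ℂ) * ⟪u, toLp 2 w⟫_ℂ) • u := by
  rw [stretch, add_mulVec, smul_mulVec, smul_mulVec, one_mulVec, vecMulVec_mulVec,
    EuclideanSpace.inner_eq_star_dotProduct, dotProduct_comm, op_smul_eq_smul, smul_smul]
  rfl

theorem euclNorm_stretch_mulVec_sq {u : EuclideanSpace ℂ (Fin d)} (hu : ‖u‖ = 1) (p q : ℝ)
    (w : Fin d → ℂ) :
    euclNorm d (stretch u p q *ᵥ w) ^ 2 =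
      p ^ 2 * euclNorm d w ^ 2 + (q ^ 2 - p ^ 2) * ‖⟪u, toLp 2 w⟫_ℂ‖ ^ 2 := by
  rw [euclNorm_eq_norm_toLp, euclNorm_eq_norm_toLp, toLp_stretch_mulVec]
  exact norm_sq_smul_add_inner_smul hu p q _

theorem det_stretch {n : ℕ} {u : EuclideanSpace ℂ (Fin (n + 1))} (hu : ‖u‖ = 1) {p : ℝ}
    (hp : p ≠ 0) (q : ℝ) : (stretch u p q).det = p ^ n * q := by
  have hp' : (p : ℂ) ≠ 0 := by exact_mod_cast hp
  have hu' : star (ofLp u) ⬝ᵥ ofLp u = 1 := by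
    rw [dotProduct_comm, ← EuclideanSpace.inner_eq_star_dotProduct, inner_self_eq_norm_sq_to_K, hu]
    simp
  have hsplit : stretch u p q = (p : ℂ) • (1 +
      replicateCol Unit ((((q - p : ℝ) : ℂ) / p) • ofLp u) * replicateRow Unit (star (ofLp u))) := by
    rw [stretch, vecMulVec_eq Unit, replicateCol_smul, smul_mul, smul_add, smul_smul,
      mul_div_cancel₀ _ hp']
  rw [hsplit, det_smul, det_one_add_replicateCol_mul_replicateRow, dotProduct_smul, hu',
    Fintype.card_fin, pow_succ, smul_eq_mul, mul_one]
  push_cast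
  field_simp
  ring

end Stretch

section WithNorm

variable {d : ℕ} {ν : (Fin d → ℂ) → ℝ}

/-- `ℂ^d` normed by `ν`, as a type synonym: `Fin d → ℂ` already carries the sup norm. -/
def WithNorm (_ν : (Fin d → ℂ) → ℝ) : Type := Fin d → ℂ

instance : AddCommGroup (WithNorm ν) := inferInstanceAs (AddCommGroup (Fin d → ℂ))
instance : Module ℂ (WithNorm ν) := inferInstanceAs (Module ℂ (Fin d → ℂ))
instance : Norm (WithNorm ν) := ⟨ν⟩
instance : FiniteDimensional ℂ (WithNorm ν) := inferInstanceAs (FiniteDimensional ℂ (Fin d → ℂ))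

theorem IsNorm.normedSpaceCore (hν : IsNorm d ν) : NormedSpace.Core ℂ (WithNorm ν) where
  norm_nonneg := hν.nonneg
  norm_smul := hν.homog
  norm_triangle := hν.triangle
  norm_eq_zero_iff := hν.eq_zero_iff

theorem IsNorm.exists_dual (hν : IsNorm d ν) (x : Fin d → ℂ) :
    ∃ g : (Fin d → ℂ) →ₗ[ℂ] ℂ, (∀ v, ‖g v‖ ≤ ν v) ∧ g x = ν x := by
  let := NormedAddCommGroup.ofCore hν.normedSpaceCore
  let := NormedSpace.ofCore hν.normedSpaceCore
  obtain ⟨g, hg, hgx⟩ := exists_dual_vector'' ℂ (E := WithNorm ν) x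
  refine ⟨g.toLinearMap, fun v => ?_, hgx⟩
  exact (g.le_opNorm v).trans (mul_le_of_le_one_left (norm_nonneg _) hg)

theorem IsNorm.exists_pos_mul_euclNorm_le (hν : IsNorm d ν) :
    ∃ c > 0, ∀ v, c * euclNorm d v ≤ ν v := by
  let := NormedAddCommGroup.ofCore hν.normedSpaceCore
  let := NormedSpace.ofCore hν.normedSpaceCore
  let f : WithNorm ν →ₗ[ℂ] EuclideanSpace ℂ (Fin d) :=
    (WithLp.linearEquiv 2 ℂ (Fin d → ℂ)).symm.toLinearMap
  obtain ⟨C, hC, hfC⟩ := (LinearMap.toContinuousLinearMap f).bound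
  refine ⟨C⁻¹, inv_pos.2 hC, fun v => ?_⟩
  rw [euclNorm_eq_norm_toLp, inv_mul_le_iff₀ hC]
  exact hfC v

end WithNorm

section Contractions

variable {d : ℕ} {ν : (Fin d → ℂ) → ℝ}

def contractions (ν : (Fin d → ℂ) → ℝ) : Set (Matrix (Fin d) (Fin d) ℂ) :=
  {S | ∀ v, euclNorm d (S *ᵥ v) ≤ ν v}

theorem isClosed_contractions : IsClosed (contractions ν) := by
  simp only [contractions, Set.ofPred_forall]
  exact isClosed_iInter fun v =>
    isClosed_le (continuous_euclNorm.comp (continuous_id.matrix_mulVec continuous_const))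
      continuous_const

theorem isCompact_contractions (ν : (Fin d → ℂ) → ℝ) : IsCompact (contractions ν) := by
  refine (isCompact_univ_pi fun _ => isCompact_univ_pi fun j =>
    isCompact_closedBall (0 : ℂ) (ν (Pi.single j 1))).of_isClosed_subset isClosed_contractions ?_
  intro (S : Matrix (Fin d) (Fin d) ℂ) hS i _ j _
  rw [mem_closedBall_zero_iff]
  calc ‖S i j‖ = ‖(S *ᵥ Pi.single j 1) i‖ := by rw [mulVec_single_one]; rfl
    _ ≤ euclNorm d (S *ᵥ Pi.single j 1) := norm_apply_le_euclNorm _ i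
    _ ≤ ν (Pi.single j 1) := hS _

theorem IsNorm.exists_isMaxOn_norm_det (hν : IsNorm d ν) :
    ∃ S ∈ contractions ν, IsUnit S.det ∧ IsMaxOn (fun T => ‖T.det‖) (contractions ν) S := by
  obtain ⟨c, hc, hcν⟩ := hν.exists_pos_mul_euclNorm_le
  have hc_mem : (c : ℂ) • (1 : Matrix (Fin d) (Fin d) ℂ) ∈ contractions ν := fun v => by
    rw [smul_mulVec, one_mulVec, euclNorm_smul, Complex.norm_real, Real.norm_of_nonneg hc.le]
    exact hcν v
  obtain ⟨S, hS, hmax⟩ := (isCompact_contractions ν).exists_isMaxOn ⟨_, hc_mem⟩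
    (continuous_id.matrix_det.norm).continuousOn
  refine ⟨S, hS, isUnit_iff_ne_zero.2 fun h0 => ?_, hmax⟩
  have := hmax hc_mem
  simp [h0, hc.ne'] at this

end Contractions

section Perturbation

variable {d : ℕ} {ν : (Fin d → ℂ) → ℝ}

theorem exists_inner_mulVec_eq {S : Matrix (Fin d) (Fin d) ℂ} (hS : IsUnit S.det)
    (g : (Fin d → ℂ) →ₗ[ℂ] ℂ) :
    ∃ ψ : EuclideanSpace ℂ (Fin d), ∀ v, ⟪ψ, toLp 2 (S *ᵥ v)⟫_ℂ = g v := by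
  let φ : EuclideanSpace ℂ (Fin d) →ₗ[ℂ] ℂ :=
    g ∘ₗ S⁻¹.mulVecLin ∘ₗ (WithLp.linearEquiv 2 ℂ (Fin d → ℂ)).toLinearMap
  refine ⟨(InnerProductSpace.toDual ℂ _).symm (LinearMap.toContinuousLinearMap φ), fun v => ?_⟩
  rw [InnerProductSpace.toDual_symm_apply]
  simp [φ, mulVec_mulVec, nonsing_inv_mul _ hS]

theorem IsNorm.exists_slab (hν : IsNorm d ν) {S : Matrix (Fin d) (Fin d) ℂ} (hS : IsUnit S.det)
    {x : Fin d → ℂ} (hx : d * euclNorm d (S *ᵥ x) ^ 2 < ν x ^ 2) :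
    ∃ u : EuclideanSpace ℂ (Fin d), ‖u‖ = 1 ∧ ∃ l : ℝ, 0 < l ∧ d * l ^ 2 < 1 ∧
      ∀ v, ‖⟪u, toLp 2 (S *ᵥ v)⟫_ℂ‖ ≤ l * ν v := by
  obtain ⟨g, hg, hgx⟩ := hν.exists_dual x
  obtain ⟨ψ, hψ⟩ := exists_inner_mulVec_eq hS g
  have hνx : ν x ≤ ‖ψ‖ * euclNorm d (S *ᵥ x) := by
    calc ν x = ‖g x‖ := by rw [hgx, Complex.norm_real, Real.norm_of_nonneg (hν.nonneg x)]
      _ = ‖⟪ψ, toLp 2 (S *ᵥ x)⟫_ℂ‖ := by rw [hψ]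
      _ ≤ ‖ψ‖ * euclNorm d (S *ᵥ x) := by
        rw [euclNorm_eq_norm_toLp]
        exact norm_inner_le_norm _ _
  have hdψ : d < ‖ψ‖ ^ 2 := by
    refine lt_of_mul_lt_mul_right ?_ (sq_nonneg (euclNorm d (S *ᵥ x)))
    calc d * euclNorm d (S *ᵥ x) ^ 2 < ν x ^ 2 := hx
      _ ≤ (‖ψ‖ * euclNorm d (S *ᵥ x)) ^ 2 := pow_le_pow_left₀ (hν.nonneg x) hνx 2
      _ = ‖ψ‖ ^ 2 * euclNorm d (S *ᵥ x) ^ 2 := mul_pow _ _ _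
  have hψ0 : 0 < ‖ψ‖ := norm_pos_iff.2 fun h => by simp [h] at hdψ; exact hdψ.not_ge d.cast_nonneg
  refine ⟨((‖ψ‖⁻¹ : ℝ) : ℂ) • ψ, ?_, ‖ψ‖⁻¹, inv_pos.2 hψ0, ?_, fun v => ?_⟩
  · rw [norm_smul, Complex.norm_real, Real.norm_of_nonneg (inv_nonneg.2 (norm_nonneg ψ)),
      inv_mul_cancel₀ hψ0.ne']
  · rw [inv_pow, ← div_eq_mul_inv, div_lt_one (by positivity)]
    exact hdψ
  · rw [inner_smul_left, norm_mul, hψ, Complex.norm_conj, Complex.norm_real,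
      Real.norm_of_nonneg (inv_nonneg.2 (norm_nonneg ψ))]
    exact mul_le_mul_of_nonneg_left (hg v) (inv_nonneg.2 (norm_nonneg ψ))

theorem exists_det_gt_of_slab {S : Matrix (Fin d) (Fin d) ℂ} (hS : S ∈ contractions ν)
    (hdet : IsUnit S.det) {u : EuclideanSpace ℂ (Fin d)} (hu : ‖u‖ = 1) {l : ℝ} (hl : 0 < l)
    (hdl : d * l ^ 2 < 1) (hslab : ∀ v, ‖⟪u, toLp 2 (S *ᵥ v)⟫_ℂ‖ ≤ l * ν v) :
    ∃ T ∈ contractions ν, ‖S.det‖ < ‖T.det‖ := by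
  obtain ⟨n, rfl⟩ : ∃ n, d = n + 1 := Nat.exists_eq_succ_of_ne_zero <| by
    rintro rfl
    simp [Subsingleton.elim u 0] at hu
  obtain ⟨p, q, hp, hpq, hpql, hpq1⟩ := exists_stretch_params hl (by exact_mod_cast hdl)
  refine ⟨stretch u p q * S, fun v => ?_, ?_⟩
  · have hνv : 0 ≤ ν v := (euclNorm_nonneg _).trans (hS v)
    have hpq2 : 0 ≤ q ^ 2 - p ^ 2 := sub_nonneg.2 (pow_le_pow_left₀ hp.le hpq 2)
    rw [← mulVec_mulVec, ← pow_le_pow_iff_left₀ (euclNorm_nonneg _) hνv two_ne_zero]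
    calc euclNorm (n + 1) (stretch u p q *ᵥ (S *ᵥ v)) ^ 2
        = p ^ 2 * euclNorm (n + 1) (S *ᵥ v) ^ 2 +
            (q ^ 2 - p ^ 2) * ‖⟪u, toLp 2 (S *ᵥ v)⟫_ℂ‖ ^ 2 :=
          euclNorm_stretch_mulVec_sq hu p q _
      _ ≤ p ^ 2 * ν v ^ 2 + (q ^ 2 - p ^ 2) * (l * ν v) ^ 2 := by
          gcongr
          exacts [euclNorm_nonneg _, hS v, hslab v]
      _ = (p ^ 2 * (1 - l ^ 2) + q ^ 2 * l ^ 2) * ν v ^ 2 := by ring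
      _ ≤ ν v ^ 2 := mul_le_of_le_one_left (sq_nonneg _) hpql
  · rw [det_mul, norm_mul, det_stretch hu hp.ne', ← Complex.ofReal_pow, ← Complex.ofReal_mul,
      Complex.norm_real, Real.norm_of_nonneg (by positivity)]
    exact lt_mul_of_one_lt_left (norm_pos_iff.2 hdet.ne_zero) hpq1

end Perturbation

theorem rpow_neg_half_mul_le {x a b : ℝ} (hx : 0 ≤ x) (hb : 0 ≤ b) (h : a ^ 2 ≤ x * b ^ 2) :
    x ^ (-(1 / 2) : ℝ) * a ≤ b := by
  rcases hx.eq_or_lt with rfl | hx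
  · rwa [Real.zero_rpow (by norm_num), zero_mul]
  rw [Real.rpow_neg hx.le, ← Real.sqrt_eq_rpow, inv_mul_le_iff₀ (Real.sqrt_pos.2 hx)]
  refine (le_abs_self a).trans (abs_le_of_sq_le_sq ?_ (by positivity))
  rwa [mul_pow, Real.sq_sqrt hx.le]

/-- For every norm `‖·‖₁` on `ℂ^d` there is an invertible matrix `S` with
`d^{-1/2}·‖v‖₁ ≤ ‖Sv‖_e ≤ ‖v‖₁` for all `v`. -/
theorem norm_comparison_with_euclidean
    (d : ℕ) (ν : (Fin d → ℂ) → ℝ) (hν : IsNorm d ν) :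
    ∃ S : Matrix (Fin d) (Fin d) ℂ, IsUnit S ∧
      ∀ v : Fin d → ℂ,
        (d : ℝ) ^ (-(1 / 2) : ℝ) * ν v ≤ euclNorm d (S.mulVec v) ∧
        euclNorm d (S.mulVec v) ≤ ν v := by
  obtain ⟨S, hS, hdet, hmax⟩ := hν.exists_isMaxOn_norm_det
  refine ⟨S, (isUnit_iff_isUnit_det S).2 hdet, fun v => ⟨?_, hS v⟩⟩
  refine rpow_neg_half_mul_le d.cast_nonneg (euclNorm_nonneg _) (not_lt.1 fun hv => ?_)
  obtain ⟨u, hu, l, hl, hdl, hslab⟩ := hν.exists_slab hdet hv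
  obtain ⟨T, hT, hdetT⟩ := exists_det_gt_of_slab hS hdet hu hl hdl hslab
  exact (hmax hT).not_gt hdetT
end
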